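/- arXiv:2406.04646 — 2 statements merged into one kernel-verified Lean document; each statement's English description precedes it below -/
import Mathlib

section
/- O(1/k) rate for iBPDCA with (SC1) (Proposition 3.1(v)). In the iBPDCA setting with stopping criterion (SC1), if F is bounded below with ζ := lim_{k→∞} F(x^k), then for every k ≥ 1: min_{0 ≤ i ≤ k−1} D_φ(x^{i+1}, x^i) ≤ (F(x^0) − ζ) / (((1−σ)γ_min − L)·k) and min_{0 ≤ i ≤ k−1} D_φ(x^i, x^{i+1}) ≤ (F(x^0) − ζ)/(γ_min·k). -/
open Filter Topology Bornology RealInnerProductSpace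
open scoped Classical

noncomputable section

/-- `ℝⁿ` with the Euclidean inner product. -/
abbrev E (n : ℕ) := EuclideanSpace ℝ (Fin n)

/-- Bregman distance `D_φ(x, y) = φ(x) − φ(y) − ⟨∇φ(y), x − y⟩` associated with the
kernel `φ` whose gradient is `φ'`. -/
def breg {n : ℕ} (φ : E n → ℝ) (φ' : E n → E n) (x y : E n) : ℝ :=
  φ x - φ y - ⟪φ' y, x - y⟫

/-- `ε`-subdifferential at `x` of the extended-real-valued convex function that is equal
to `h` on its domain `S` and `+∞` outside `S`:
`∂_ε h(x) = {d : h(y) ≥ h(x) + ⟨d, y − x⟩ − ε for all y}` (the inequality being automatic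
for `y ∉ S`). -/
def epsSubdiff {n : ℕ} (S : Set (E n)) (h : E n → ℝ) (ε : ℝ) (x : E n) : Set (E n) :=
  {d | ∀ y ∈ S, h x + ⟪d, y - x⟫ - ε ≤ h y}

/-!
Each (SC1) step is a sufficient-descent step: pairing the inexact optimality residual `Δ^k`
with `x^{k+1} − x^k` and using the ε-subgradient inequalities for `P₁` and `P₂`, the descent
lemma for `f`, and the three-point identity for `D_φ`, the `δ_k` terms cancel and
`((1−σ)γ_min − L)·D_φ(x^{k+1}, x^k) + γ_min·D_φ(x^k, x^{k+1}) ≤ F(x^k) − F(x^{k+1})`.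
So `F(x^k)` decreases to `ζ`, and telescoping bounds `k` times either minimum by `F(x^0) − ζ`.
-/

theorem ConvexOn.add_inner_le_of_hasGradientAt {F : Type*} [NormedAddCommGroup F]
    [InnerProductSpace ℝ F] [CompleteSpace F] {U : Set F} {φ : F → ℝ} {g u v : F}
    (hφ : ConvexOn ℝ U φ) (hu : u ∈ U) (hv : v ∈ U) (hg : HasGradientAt φ g v) :
    φ v + ⟪g, u - v⟫ ≤ φ u := by
  set ℓ := AffineMap.lineMap (k := ℝ) v u
  have hderiv : HasDerivAt (φ ∘ ℓ) ⟪g, u - v⟫ 0 := by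
    have hφℓ : HasFDerivAt φ (InnerProductSpace.toDual ℝ F g) (ℓ 0) := by
      simpa [ℓ] using hg.hasFDerivAt
    simpa using hφℓ.comp_hasDerivAt 0 AffineMap.hasDerivAt_lineMap
  have hslope := (hφ.comp_affineMap ℓ).le_slope_of_hasDerivAt (x := 0) (y := 1)
    (by simpa [ℓ] using hv) (by simpa [ℓ] using hu) one_pos hderiv
  rw [slope_def_field] at hslope
  simp only [Function.comp_apply, ℓ, AffineMap.lineMap_apply_one,
    AffineMap.lineMap_apply_zero] at hslope
  linarith

theorem breg_nonneg {n : ℕ} {U : Set (E n)} {φ : E n → ℝ} {φ' : E n → E n}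
    (hφ : ConvexOn ℝ U φ) (hφ' : ∀ v ∈ U, HasGradientAt φ (φ' v) v) {u v : E n}
    (hu : u ∈ U) (hv : v ∈ U) : 0 ≤ breg φ φ' u v := by
  have := hφ.add_inner_le_of_hasGradientAt hu hv (hφ' v hv)
  rw [breg]
  linarith

theorem inner_sub_sub_eq_breg_add_breg {n : ℕ} (φ : E n → ℝ) (φ' : E n → E n) (a b : E n) :
    ⟪φ' b - φ' a, b - a⟫ = breg φ φ' b a + breg φ φ' a b := by
  rw [breg, breg, inner_sub_left, ← neg_sub b a, inner_neg_right]
  ring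

theorem sufficient_descent_of_sc1 {n : ℕ} {S : Set (E n)} {P₁ P₂ f φ : E n → ℝ}
    {f' φ' : E n → E n} {L γ σ δ : ℝ} {a b d ξ Δ : E n}
    (ha : a ∈ S) (hd : d ∈ epsSubdiff S P₁ δ b) (hξ : ξ ∈ epsSubdiff Set.univ P₂ 0 a)
    (hf : f b - f a - ⟪f' a, b - a⟫ ≤ L * breg φ φ' b a)
    (hΔ : Δ = d + f' a - ξ + γ • (φ' b - φ' a))
    (hSC : ‖Δ‖ ^ 2 + |⟪Δ, b - a⟫| + δ ≤ σ * γ * breg φ φ' b a) :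
    ((1 - σ) * γ - L) * breg φ φ' b a + γ * breg φ φ' a b
      ≤ (P₁ a - P₂ a + f a) - (P₁ b - P₂ b + f b) := by
  have hP₁ : P₁ b - ⟪d, b - a⟫ - δ ≤ P₁ a := by
    have := hd a ha
    rwa [← neg_sub b a, inner_neg_right, ← sub_eq_add_neg] at this
  have hP₂ : P₂ a + ⟪ξ, b - a⟫ - 0 ≤ P₂ b := hξ b (Set.mem_univ b)
  have hΔinner : ⟪Δ, b - a⟫
      = ⟪d, b - a⟫ + ⟪f' a, b - a⟫ - ⟪ξ, b - a⟫ + γ * (breg φ φ' b a + breg φ φ' a b) := by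
    rw [hΔ, inner_add_left, inner_sub_left, inner_add_left, real_inner_smul_left,
      inner_sub_sub_eq_breg_add_breg]
  have hΔle : ⟪Δ, b - a⟫ + δ ≤ σ * γ * breg φ φ' b a := by
    linarith [le_abs_self ⟪Δ, b - a⟫, sq_nonneg ‖Δ‖]
  linarith

theorem Finset.inf'_range_le_div_of_mul_le_sub_succ {u F : ℕ → ℝ} {c ζ : ℝ} (hc : 0 < c)
    (hdescent : ∀ i, c * u i ≤ F i - F (i + 1)) {k : ℕ} (hk : k ≠ 0) (hζ : ζ ≤ F k) :
    (Finset.range k).inf' (Finset.nonempty_range_iff.mpr hk) u ≤ (F 0 - ζ) / (c * k) := by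
  set m := (Finset.range k).inf' (Finset.nonempty_range_iff.mpr hk) u
  have hsum : c * ∑ i ∈ Finset.range k, u i ≤ F 0 - F k := by
    rw [Finset.mul_sum, ← Finset.sum_range_sub']
    exact Finset.sum_le_sum fun i _ ↦ hdescent i
  have hmin : k * m ≤ ∑ i ∈ Finset.range k, u i := by
    simpa using Finset.card_nsmul_le_sum _ u m fun i hi ↦ Finset.inf'_le u hi
  rw [le_div_iff₀ (by positivity)]
  calc m * (c * k) = c * (k * m) := by ring
    _ ≤ c * ∑ i ∈ Finset.range k, u i := mul_le_mul_of_nonneg_left hmin hc.le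
    _ ≤ F 0 - F k := hsum
    _ ≤ F 0 - ζ := by linarith

theorem ibpdca_sc1_rate_general
    {n : ℕ} (S U X : Set (E n)) (P₁ P₂ f φ : E n → ℝ)
    (f' φ' : E n → E n) (L γmin γmax σ : ℝ)
    (x : ℕ → E n) (γ δ : ℕ → ℝ) (ξ d Δ : ℕ → E n)
    -- `f` and `φ` are differentiable on the open convex set `U`, `φ` strictly convex on `U`
    (hφdiff : ∀ u ∈ U, HasGradientAt φ (φ' u) u)
    (hφsc : StrictConvexOn ℝ U φ)
    -- `(f, φ)` is `L`-smooth adaptable restricted on `X`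
    (hL : 0 ≤ L)
    (hsmad : ∀ u ∈ X, ∀ v ∈ X, |f v - f u - ⟪f' u, v - u⟫| ≤ L * breg φ φ' v u)
    -- the iterates and the inexact optimality condition
    (hxmem : ∀ k, x k ∈ S ∩ U ∩ X)
    (hLγ : L < γmin) (hγ : ∀ k, γmin ≤ γ k ∧ γ k ≤ γmax)
    (hξ : ∀ k, ξ k ∈ epsSubdiff Set.univ P₂ 0 (x k))
    (hd : ∀ k, d (k + 1) ∈ epsSubdiff S P₁ (δ k) (x (k + 1)))
    (hΔ : ∀ k, Δ k = d (k + 1) + f' (x k) - ξ k + γ k • (φ' (x (k + 1)) - φ' (x k)))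
    -- the stopping criterion
    (hσ : σ < (γmin - L) / γmin)
    (hSC1 : ∀ k, ‖Δ k‖ ^ 2 + |⟪Δ k, x (k + 1) - x k⟫| + δ k
        ≤ σ * γ k * breg φ φ' (x (k + 1)) (x k))
    -- `F` is bounded below, and `ζ` is the limit of `F(x^k)`
    (ζ : ℝ) (hζ : Tendsto (fun k => P₁ (x k) - P₂ (x k) + f (x k)) atTop (𝓝 ζ)) :
    ∀ k : ℕ, ∀ hk : k ≠ 0,
      (Finset.range k).inf' (Finset.nonempty_range_iff.mpr hk)
          (fun i => breg φ φ' (x (i + 1)) (x i))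
        ≤ ((P₁ (x 0) - P₂ (x 0) + f (x 0)) - ζ) / (((1 - σ) * γmin - L) * k)
      ∧ (Finset.range k).inf' (Finset.nonempty_range_iff.mpr hk)
          (fun i => breg φ φ' (x i) (x (i + 1)))
        ≤ ((P₁ (x 0) - P₂ (x 0) + f (x 0)) - ζ) / (γmin * k) := by
  set F : ℕ → ℝ := fun k => P₁ (x k) - P₂ (x k) + f (x k)
  have hγmin : 0 < γmin := hL.trans_lt hLγ
  have hc : 0 < (1 - σ) * γmin - L := by linarith [(lt_div_iff₀ hγmin).mp hσ]
  have hσ1 : 0 ≤ 1 - σ := (pos_of_mul_pos_left (by linarith) hγmin.le).le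
  have hD : ∀ i j, 0 ≤ breg φ φ' (x i) (x j) := fun i j ↦
    breg_nonneg hφsc.convexOn hφdiff (hxmem i).1.2 (hxmem j).1.2
  have hstep : ∀ i, ((1 - σ) * γmin - L) * breg φ φ' (x (i + 1)) (x i)
      + γmin * breg φ φ' (x i) (x (i + 1)) ≤ F i - F (i + 1) := by
    intro i
    have hdescent := sufficient_descent_of_sc1 (hxmem i).1.1 (hd i) (hξ i)
      (abs_le.mp (hsmad _ (hxmem i).2 _ (hxmem (i + 1)).2)).2 (hΔ i) (hSC1 i)
    have hγi := (hγ i).1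
    linarith [mul_le_mul_of_nonneg_right hγi (hD i (i + 1)),
      mul_le_mul_of_nonneg_right (mul_le_mul_of_nonneg_left hγi hσ1) (hD (i + 1) i)]
  have hdesc₁ : ∀ i, ((1 - σ) * γmin - L) * breg φ φ' (x (i + 1)) (x i) ≤ F i - F (i + 1) :=
    fun i ↦ by linarith [hstep i, mul_nonneg hγmin.le (hD i (i + 1))]
  have hdesc₂ : ∀ i, γmin * breg φ φ' (x i) (x (i + 1)) ≤ F i - F (i + 1) :=
    fun i ↦ by linarith [hstep i, mul_nonneg hc.le (hD (i + 1) i)]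
  have hFanti : Antitone F := antitone_nat_of_succ_le fun i ↦ by
    linarith [hdesc₂ i, mul_nonneg hγmin.le (hD i (i + 1))]
  have hζF : ∀ k, ζ ≤ F k := hFanti.le_of_tendsto hζ
  intro k hk
  exact ⟨Finset.inf'_range_le_div_of_mul_le_sub_succ hc hdesc₁ hk (hζF k),
    Finset.inf'_range_le_div_of_mul_le_sub_succ hγmin hdesc₂ hk (hζF k)⟩

/-- **Proposition 3.1(v).** O(1/k) rate for iBPDCA with (SC1). -/
theorem ibpdca_sc1_rate
    {n : ℕ} (S U X : Set (E n)) (P₁ P₂ f φ : E n → ℝ)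
    (f' φ' : E n → E n) (L γmin γmax σ : ℝ)
    (x : ℕ → E n) (γ δ : ℕ → ℝ) (ξ d Δ : ℕ → E n)
    -- `P₁` is proper, lower semicontinuous and convex (domain `S`, real values `P₁` on `S`)
    (hSne : S.Nonempty)
    (hP₁conv : ConvexOn ℝ S P₁)
    (hP₁lsc : LowerSemicontinuous (fun y => if y ∈ S then (P₁ y : EReal) else (⊤ : EReal)))
    -- `P₂` is convex and continuous
    (hP₂conv : ConvexOn ℝ Set.univ P₂) (hP₂cont : Continuous P₂)
    -- `f` and `φ` are differentiable on the open convex set `U`, `φ` strictly convex on `U`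
    (hUopen : IsOpen U) (hUconv : Convex ℝ U)
    (hfdiff : ∀ u ∈ U, HasGradientAt f (f' u) u)
    (hφdiff : ∀ u ∈ U, HasGradientAt φ (φ' u) u)
    (hφsc : StrictConvexOn ℝ U φ)
    -- `(f, φ)` is `L`-smooth adaptable restricted on `X`
    (hL : 0 ≤ L)
    (hsmad : ∀ u ∈ X, ∀ v ∈ X, |f v - f u - ⟪f' u, v - u⟫| ≤ L * breg φ φ' v u)
    -- the iterates and the inexact optimality condition
    (hxmem : ∀ k, x k ∈ S ∩ U ∩ X)
    (hLγ : L < γmin) (hγ : ∀ k, γmin ≤ γ k ∧ γ k ≤ γmax)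
    (hδpos : ∀ k, 0 ≤ δ k)
    (hξ : ∀ k, ξ k ∈ epsSubdiff Set.univ P₂ 0 (x k))
    (hd : ∀ k, d (k + 1) ∈ epsSubdiff S P₁ (δ k) (x (k + 1)))
    (hΔ : ∀ k, Δ k = d (k + 1) + f' (x k) - ξ k + γ k • (φ' (x (k + 1)) - φ' (x k)))
    -- the stopping criterion
    (hσ0 : 0 ≤ σ) (hσ : σ < (γmin - L) / γmin)
    (hSC1 : ∀ k, ‖Δ k‖ ^ 2 + |⟪Δ k, x (k + 1) - x k⟫| + δ k
        ≤ σ * γ k * breg φ φ' (x (k + 1)) (x k))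
    -- `F` is bounded below, and `ζ` is the limit of `F(x^k)`
    (hFbdd : ∃ mlo : ℝ, ∀ y ∈ S, mlo ≤ P₁ y - P₂ y + f y)
    (ζ : ℝ) (hζ : Tendsto (fun k => P₁ (x k) - P₂ (x k) + f (x k)) atTop (𝓝 ζ)) :
    ∀ k : ℕ, ∀ hk : k ≠ 0,
      (Finset.range k).inf' (Finset.nonempty_range_iff.mpr hk)
          (fun i => breg φ φ' (x (i + 1)) (x i))
        ≤ ((P₁ (x 0) - P₂ (x 0) + f (x 0)) - ζ) / (((1 - σ) * γmin - L) * k)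
      ∧ (Finset.range k).inf' (Finset.nonempty_range_iff.mpr hk)
          (fun i => breg φ φ' (x i) (x (i + 1)))
        ≤ ((P₁ (x 0) - P₂ (x 0) + f (x 0)) - ζ) / (γmin * k) :=
  ibpdca_sc1_rate_general S U X P₁ P₂ f φ f' φ' L γmin γmax σ x γ δ ξ d Δ hφdiff hφsc hL hsmad hxmem
    hLγ hγ hξ hd hΔ hσ hSC1 ζ hζ
end
end

section
/- Quadratic sufficient decrease under (SC1) and strong convexity (key inequality in the proof of Theorem 4.2). In the iBPDCA setting with stopping criterion (SC1), if in addition φ is μ-strongly convex on U (i.e., D_φ(y, x) ≥ (μ/2)‖y − x‖² for all x, y ∈ U) with μ > 0, then for every k: F(x^k) − F(x^{k+1}) ≥ (((2−σ)γ_min − L)·μ/2)·‖x^{k+1} − x^k‖². -/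
open Filter Topology Bornology RealInnerProductSpace
open scoped Classical

noncomputable section

/-!
At `a = x k`, `b = x (k + 1)`, adding the `δ`-subgradient inequality for `P₁`, the subgradient
inequality for `P₂` and the upper bound from smooth adaptability, and using
`⟪∇φ b − ∇φ a, b − a⟫ = D_φ(b, a) + D_φ(a, b)`, gives
`F a − F b ≥ γ (D_φ(b, a) + D_φ(a, b)) − L D_φ(b, a) − ⟪Δ, b − a⟫ − δ`.
(SC1) absorbs the inexactness `⟪Δ, b − a⟫ + δ` into `σ γ D_φ(b, a)`, and strong convexity
bounds both Bregman distances below by `μ/2 ‖b − a‖²`.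
-/

section

variable {n : ℕ}

theorem breg_add_breg_swap (φ : E n → ℝ) (φ' : E n → E n) (a b : E n) :
    breg φ φ' b a + breg φ φ' a b = ⟪φ' b - φ' a, b - a⟫ := by
  simp only [breg, inner_sub_left, inner_sub_right]
  ring

section InexactStep

variable {S : Set (E n)} {P₁ P₂ f φ : E n → ℝ} {f' φ' : E n → E n} {L γ δ : ℝ}
  {a b d ξ Δ : E n}

theorem le_objective_decrease_of_inexact_step (ha : a ∈ S)
    (hd : d ∈ epsSubdiff S P₁ δ b) (hξ : ξ ∈ epsSubdiff Set.univ P₂ 0 a)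
    (hf : f b - f a - ⟪f' a, b - a⟫ ≤ L * breg φ φ' b a)
    (hΔ : Δ = d + f' a - ξ + γ • (φ' b - φ' a)) :
    γ * (breg φ φ' b a + breg φ φ' a b) - L * breg φ φ' b a - ⟪Δ, b - a⟫ - δ
      ≤ (P₁ a - P₂ a + f a) - (P₁ b - P₂ b + f b) := by
  have hP₁ : P₁ b + ⟪d, a - b⟫ - δ ≤ P₁ a := hd a ha
  have hP₂ : P₂ a + ⟪ξ, b - a⟫ - 0 ≤ P₂ b := hξ b (Set.mem_univ b)
  have hd_swap : ⟪d, a - b⟫ = -⟪d, b - a⟫ := by rw [← inner_neg_right, neg_sub]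
  have hΔ_inner : ⟪Δ, b - a⟫ = ⟪d, b - a⟫ + ⟪f' a, b - a⟫ - ⟪ξ, b - a⟫
      + γ * (breg φ φ' b a + breg φ φ' a b) := by
    rw [hΔ, breg_add_breg_swap]
    simp only [inner_add_left, inner_sub_left, real_inner_smul_left]
  linarith

theorem bregman_decrease_of_sc1 {σ : ℝ} (ha : a ∈ S)
    (hd : d ∈ epsSubdiff S P₁ δ b) (hξ : ξ ∈ epsSubdiff Set.univ P₂ 0 a)
    (hf : f b - f a - ⟪f' a, b - a⟫ ≤ L * breg φ φ' b a)
    (hΔ : Δ = d + f' a - ξ + γ • (φ' b - φ' a))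
    (hSC1 : ‖Δ‖ ^ 2 + |⟪Δ, b - a⟫| + δ ≤ σ * γ * breg φ φ' b a) :
    ((1 - σ) * γ - L) * breg φ φ' b a + γ * breg φ φ' a b
      ≤ (P₁ a - P₂ a + f a) - (P₁ b - P₂ b + f b) := by
  have hstep := le_objective_decrease_of_inexact_step ha hd hξ hf hΔ
  linarith [le_abs_self ⟪Δ, b - a⟫, sq_nonneg ‖Δ‖]

end InexactStep

theorem lt_one_of_lt_sub_div {L γ σ : ℝ} (hL : 0 ≤ L) (hLγ : L < γ)
    (hσ : σ < (γ - L) / γ) : σ < 1 :=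
  hσ.trans_le (div_le_one_of_le₀ (sub_le_self γ hL) (hL.trans hLγ.le))

theorem sub_nonneg_of_lt_sub_div {L γmin γ σ : ℝ} (hL : 0 ≤ L) (hLγ : L < γmin)
    (hσ : σ < (γmin - L) / γmin) (hγ : γmin ≤ γ) : 0 ≤ (1 - σ) * γ - L := by
  have hσγ : σ * γmin < γmin - L := (lt_div_iff₀ (hL.trans_lt hLγ)).1 hσ
  have hσ_lt_one := lt_one_of_lt_sub_div hL hLγ hσ
  nlinarith [mul_nonneg (sub_nonneg.2 hσ_lt_one.le) (sub_nonneg.2 hγ)]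

end

theorem ibpdca_sc1_quadratic_decrease_general
    {n : ℕ} (S U X : Set (E n)) (P₁ P₂ f φ : E n → ℝ)
    (f' φ' : E n → E n) (L γmin γmax σ : ℝ)
    (x : ℕ → E n) (γ δ : ℕ → ℝ) (ξ d Δ : ℕ → E n)
    -- `(f, φ)` is `L`-smooth adaptable restricted on `X`
    (hL : 0 ≤ L)
    (hsmad : ∀ u ∈ X, ∀ v ∈ X, |f v - f u - ⟪f' u, v - u⟫| ≤ L * breg φ φ' v u)
    -- the iterates and the inexact optimality condition
    (hxmem : ∀ k, x k ∈ S ∩ U ∩ X)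
    (hLγ : L < γmin) (hγ : ∀ k, γmin ≤ γ k ∧ γ k ≤ γmax)
    (hξ : ∀ k, ξ k ∈ epsSubdiff Set.univ P₂ 0 (x k))
    (hd : ∀ k, d (k + 1) ∈ epsSubdiff S P₁ (δ k) (x (k + 1)))
    (hΔ : ∀ k, Δ k = d (k + 1) + f' (x k) - ξ k + γ k • (φ' (x (k + 1)) - φ' (x k)))
    -- the stopping criterion
    (hσ : σ < (γmin - L) / γmin)
    (hSC1 : ∀ k, ‖Δ k‖ ^ 2 + |⟪Δ k, x (k + 1) - x k⟫| + δ k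
        ≤ σ * γ k * breg φ φ' (x (k + 1)) (x k))
    -- `φ` is `μ`-strongly convex on `U`
    (μ : ℝ) (hμ : 0 < μ)
    (hφsconv : ∀ u ∈ U, ∀ v ∈ U, μ / 2 * ‖v - u‖ ^ 2 ≤ breg φ φ' v u) :
    ∀ k, ((2 - σ) * γmin - L) * μ / 2 * ‖x (k + 1) - x k‖ ^ 2
      ≤ (P₁ (x k) - P₂ (x k) + f (x k))
          - (P₁ (x (k + 1)) - P₂ (x (k + 1)) + f (x (k + 1))) := by
  intro k
  obtain ⟨⟨haS, haU⟩, haX⟩ := hxmem k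
  obtain ⟨⟨-, hbU⟩, hbX⟩ := hxmem (k + 1)
  have hγk := (hγ k).1
  have hσ_lt_one := lt_one_of_lt_sub_div hL hLγ hσ
  have hdec := bregman_decrease_of_sc1 haS (hd k) (hξ k)
    (abs_le.1 (hsmad _ haX _ hbX)).2 (hΔ k) (hSC1 k)
  have hDfwd := hφsconv _ haU _ hbU
  have hDbwd := hφsconv _ hbU _ haU
  rw [norm_sub_rev] at hDbwd
  calc ((2 - σ) * γmin - L) * μ / 2 * ‖x (k + 1) - x k‖ ^ 2
      ≤ ((2 - σ) * γ k - L) * (μ / 2 * ‖x (k + 1) - x k‖ ^ 2) := by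
        rw [mul_div_assoc, mul_assoc]
        gcongr
        linarith
    _ = ((1 - σ) * γ k - L) * (μ / 2 * ‖x (k + 1) - x k‖ ^ 2)
          + γ k * (μ / 2 * ‖x (k + 1) - x k‖ ^ 2) := by ring
    _ ≤ ((1 - σ) * γ k - L) * breg φ φ' (x (k + 1)) (x k)
          + γ k * breg φ φ' (x k) (x (k + 1)) := by
        gcongr
        · exact sub_nonneg_of_lt_sub_div hL hLγ hσ hγk
        · linarith [hL.trans_lt hLγ]
    _ ≤ _ := hdec

/-- Quadratic sufficient decrease under (SC1) and strong convexity of `φ`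
(key inequality in the proof of Theorem 4.2). -/
theorem ibpdca_sc1_quadratic_decrease
    {n : ℕ} (S U X : Set (E n)) (P₁ P₂ f φ : E n → ℝ)
    (f' φ' : E n → E n) (L γmin γmax σ : ℝ)
    (x : ℕ → E n) (γ δ : ℕ → ℝ) (ξ d Δ : ℕ → E n)
    -- `P₁` is proper, lower semicontinuous and convex (domain `S`, real values `P₁` on `S`)
    (hSne : S.Nonempty)
    (hP₁conv : ConvexOn ℝ S P₁)
    (hP₁lsc : LowerSemicontinuous (fun y => if y ∈ S then (P₁ y : EReal) else (⊤ : EReal)))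
    -- `P₂` is convex and continuous
    (hP₂conv : ConvexOn ℝ Set.univ P₂) (hP₂cont : Continuous P₂)
    -- `f` and `φ` are differentiable on the open convex set `U`, `φ` strictly convex on `U`
    (hUopen : IsOpen U) (hUconv : Convex ℝ U)
    (hfdiff : ∀ u ∈ U, HasGradientAt f (f' u) u)
    (hφdiff : ∀ u ∈ U, HasGradientAt φ (φ' u) u)
    (hφsc : StrictConvexOn ℝ U φ)
    -- `(f, φ)` is `L`-smooth adaptable restricted on `X`
    (hL : 0 ≤ L)
    (hsmad : ∀ u ∈ X, ∀ v ∈ X, |f v - f u - ⟪f' u, v - u⟫| ≤ L * breg φ φ' v u)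
    -- the iterates and the inexact optimality condition
    (hxmem : ∀ k, x k ∈ S ∩ U ∩ X)
    (hLγ : L < γmin) (hγ : ∀ k, γmin ≤ γ k ∧ γ k ≤ γmax)
    (hδpos : ∀ k, 0 ≤ δ k)
    (hξ : ∀ k, ξ k ∈ epsSubdiff Set.univ P₂ 0 (x k))
    (hd : ∀ k, d (k + 1) ∈ epsSubdiff S P₁ (δ k) (x (k + 1)))
    (hΔ : ∀ k, Δ k = d (k + 1) + f' (x k) - ξ k + γ k • (φ' (x (k + 1)) - φ' (x k)))
    -- the stopping criterion
    (hσ0 : 0 ≤ σ) (hσ : σ < (γmin - L) / γmin)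
    (hSC1 : ∀ k, ‖Δ k‖ ^ 2 + |⟪Δ k, x (k + 1) - x k⟫| + δ k
        ≤ σ * γ k * breg φ φ' (x (k + 1)) (x k))
    -- `φ` is `μ`-strongly convex on `U`
    (μ : ℝ) (hμ : 0 < μ)
    (hφsconv : ∀ u ∈ U, ∀ v ∈ U, μ / 2 * ‖v - u‖ ^ 2 ≤ breg φ φ' v u) :
    ∀ k, ((2 - σ) * γmin - L) * μ / 2 * ‖x (k + 1) - x k‖ ^ 2
      ≤ (P₁ (x k) - P₂ (x k) + f (x k))
          - (P₁ (x (k + 1)) - P₂ (x (k + 1)) + f (x (k + 1))) :=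
  ibpdca_sc1_quadratic_decrease_general S U X P₁ P₂ f φ f' φ' L γmin γmax σ x γ δ ξ d Δ hL hsmad
    hxmem hLγ hγ hξ hd hΔ hσ hSC1 μ hμ hφsconv
end
end
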